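/- arXiv:1603.08467 — 9 statements merged into one kernel-verified Lean document; each statement's English description precedes it below -/
import Mathlib

section
/- Let f : [a,b] → ℝ be a convex Riemann integrable function and t ∈ [0,1]. Then f(tb+(1-t)a) ≤ (1-t)∫₀¹ f(tα(b-a)+a) dα + t∫₀¹ f((1-t)α(b-a)+tb+(1-t)a) dα ≤ t·f(b)+(1-t)·f(a). -/
/-!
Put `c = t b + (1 - t) a`. The two integrals are the means of `f` over `[a, c]` and `[c, b]`, so
the classical Hermite–Hadamard inequality on each piece places them between the value of `f` at
the midpoint and the average of the endpoint values. Since `c` is the `t`-combination of the two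
midpoints, convexity gives the left inequality. On the right, the endpoint averages combine to
`(f c + t f b + (1 - t) f a) / 2`, and `f c ≤ t f b + (1 - t) f a`.
-/

open MeasureTheory Set

theorem IntervalIntegrable.comp_affine_unitInterval {f : ℝ → ℝ} {c d : ℝ}
    (hf : IntervalIntegrable f volume c d) :
    IntervalIntegrable (fun α => f (α * (d - c) + c)) volume 0 1 := by
  rcases eq_or_ne d c with rfl | hdc
  · simp
  simpa [sub_ne_zero.2 hdc] using (hf.comp_add_right c).comp_mul_right (c := d - c)

theorem integral_unitInterval_comp_one_sub (g : ℝ → ℝ) :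
    ∫ α in (0:ℝ)..1, g (1 - α) = ∫ α in (0:ℝ)..1, g α := by
  simp [intervalIntegral.integral_comp_sub_left]

theorem mul_sub_add_mem_Icc {c d α : ℝ} (hcd : c ≤ d) (hα : α ∈ Icc (0:ℝ) 1) :
    α * (d - c) + c ∈ Icc c d := by
  constructor <;> nlinarith [hα.1, hα.2]

namespace ConvexOn

variable {f : ℝ → ℝ} {c d : ℝ}

theorem map_midpoint_le_integral_affine (hcd : c ≤ d) (hf : ConvexOn ℝ (Icc c d) f)
    (hint : IntervalIntegrable f volume c d) :
    f ((c + d) / 2) ≤ ∫ α in (0:ℝ)..1, f (α * (d - c) + c) := by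
  have hg := hint.comp_affine_unitInterval
  have hg' : IntervalIntegrable (fun α => f ((1 - α) * (d - c) + c)) volume 0 1 := by
    simpa using (hg.comp_sub_left 1).symm
  have hsymm : ∀ α ∈ Icc (0:ℝ) 1,
      f ((c + d) / 2) ≤ (f (α * (d - c) + c) + f ((1 - α) * (d - c) + c)) / 2 := by
    intro α hα
    have h1α : 1 - α ∈ Icc (0:ℝ) 1 := ⟨by linarith [hα.2], by linarith [hα.1]⟩
    have := hf.2 (mul_sub_add_mem_Icc hcd hα) (mul_sub_add_mem_Icc hcd h1α)
      (by norm_num : (0:ℝ) ≤ 1 / 2) (by norm_num : (0:ℝ) ≤ 1 / 2) (by norm_num)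
    have hmid : (1 / 2 : ℝ) • (α * (d - c) + c) + (1 / 2 : ℝ) • ((1 - α) * (d - c) + c)
        = (c + d) / 2 := by simp only [smul_eq_mul]; ring
    rw [hmid, smul_eq_mul, smul_eq_mul] at this
    linarith
  calc f ((c + d) / 2) = ∫ _ in (0:ℝ)..1, f ((c + d) / 2) := by simp
    _ ≤ ∫ α in (0:ℝ)..1, (f (α * (d - c) + c) + f ((1 - α) * (d - c) + c)) / 2 :=
        intervalIntegral.integral_mono_on zero_le_one (by simp) ((hg.add hg').div_const 2) hsymm
    _ = ∫ α in (0:ℝ)..1, f (α * (d - c) + c) := by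
        rw [intervalIntegral.integral_div, intervalIntegral.integral_add hg hg',
          integral_unitInterval_comp_one_sub (fun α => f (α * (d - c) + c))]
        ring

theorem integral_affine_le_average (hcd : c ≤ d) (hf : ConvexOn ℝ (Icc c d) f)
    (hint : IntervalIntegrable f volume c d) :
    ∫ α in (0:ℝ)..1, f (α * (d - c) + c) ≤ (f c + f d) / 2 := by
  have hchord : ∀ α ∈ Icc (0:ℝ) 1, f (α * (d - c) + c) ≤ (1 - α) * f c + α * f d := by
    intro α hα
    have := hf.2 (left_mem_Icc.2 hcd) (right_mem_Icc.2 hcd) (sub_nonneg.2 hα.2) hα.1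
      (sub_add_cancel 1 α)
    rwa [smul_eq_mul, smul_eq_mul, show (1 - α) * c + α * d = α * (d - c) + c by ring] at this
  calc ∫ α in (0:ℝ)..1, f (α * (d - c) + c)
      ≤ ∫ α in (0:ℝ)..1, ((1 - α) * f c + α * f d) :=
        intervalIntegral.integral_mono_on zero_le_one hint.comp_affine_unitInterval
          ((by fun_prop : Continuous _).intervalIntegrable _ _) hchord
    _ = (f c + f d) / 2 := by
        rw [intervalIntegral.integral_add ((by fun_prop : Continuous _).intervalIntegrable _ _)
          ((by fun_prop : Continuous _).intervalIntegrable _ _)]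
        simp [intervalIntegral.integral_comp_sub_left (fun x => x)]
        ring

theorem hermite_hadamard_of_Icc_subset {a b : ℝ} (hf : ConvexOn ℝ (Icc a b) f)
    (hint : IntervalIntegrable f volume a b) (hcd : c ≤ d) (hsub : Icc c d ⊆ Icc a b) :
    f ((c + d) / 2) ≤ ∫ α in (0:ℝ)..1, f (α * (d - c) + c) ∧
      ∫ α in (0:ℝ)..1, f (α * (d - c) + c) ≤ (f c + f d) / 2 := by
  have hfcd := hf.subset hsub (convex_Icc c d)
  have hab : a ≤ b := nonempty_Icc.1 ((nonempty_Icc.2 hcd).mono hsub)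
  have hintcd : IntervalIntegrable f volume c d :=
    hint.mono_set (by rwa [uIcc_of_le hcd, uIcc_of_le hab])
  exact ⟨hfcd.map_midpoint_le_integral_affine hcd hintcd,
    hfcd.integral_affine_le_average hcd hintcd⟩

end ConvexOn

/-- Weighted refinement of the Hermite–Hadamard inequality: for a convex Riemann
integrable function `f : [a,b] → ℝ` and `t ∈ [0,1]`,
`f(tb+(1-t)a) ≤ (1-t)∫₀¹ f(tα(b-a)+a) dα + t∫₀¹ f((1-t)α(b-a)+tb+(1-t)a) dα
  ≤ t f(b) + (1-t) f(a)`. -/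
theorem weighted_hermite_hadamard (a b : ℝ) (hab : a ≤ b) (f : ℝ → ℝ)
    (hconv : ConvexOn ℝ (Icc a b) f)
    (hint : IntervalIntegrable f volume a b)
    (t : ℝ) (ht : t ∈ Icc (0:ℝ) 1) :
    f (t * b + (1 - t) * a) ≤
      (1 - t) * (∫ α in (0:ℝ)..1, f (t * α * (b - a) + a)) +
        t * (∫ α in (0:ℝ)..1, f ((1 - t) * α * (b - a) + t * b + (1 - t) * a)) ∧
    (1 - t) * (∫ α in (0:ℝ)..1, f (t * α * (b - a) + a)) +
        t * (∫ α in (0:ℝ)..1, f ((1 - t) * α * (b - a) + t * b + (1 - t) * a)) ≤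
      t * f b + (1 - t) * f a := by
  obtain ⟨ht0, ht1⟩ := ht
  set c := t * b + (1 - t) * a with hc
  have hac : a ≤ c := by nlinarith
  have hcb : c ≤ b := by nlinarith
  have hI₁ : ∫ α in (0:ℝ)..1, f (t * α * (b - a) + a) =
      ∫ α in (0:ℝ)..1, f (α * (c - a) + a) := by
    congr! 3 with α; rw [hc]; ring
  have hI₂ : ∫ α in (0:ℝ)..1, f ((1 - t) * α * (b - a) + t * b + (1 - t) * a) =
      ∫ α in (0:ℝ)..1, f (α * (b - c) + c) := by
    congr! 3 with α; rw [hc]; ring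
  obtain ⟨hmid₁, havg₁⟩ :=
    hconv.hermite_hadamard_of_Icc_subset hint hac (Icc_subset_Icc le_rfl hcb)
  obtain ⟨hmid₂, havg₂⟩ :=
    hconv.hermite_hadamard_of_Icc_subset hint hcb (Icc_subset_Icc hac le_rfl)
  rw [hI₁, hI₂]
  constructor
  · have hc_le := hconv.2 (x := (a + c) / 2) (y := (c + b) / 2) ⟨by linarith, by linarith⟩
      ⟨by linarith, by linarith⟩ (sub_nonneg.2 ht1) ht0 (sub_add_cancel 1 t)
    rw [smul_eq_mul, smul_eq_mul, smul_eq_mul, smul_eq_mul,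
      show (1 - t) * ((a + c) / 2) + t * ((c + b) / 2) = c by rw [hc]; ring] at hc_le
    linarith [mul_le_mul_of_nonneg_left hmid₁ (sub_nonneg.2 ht1),
      mul_le_mul_of_nonneg_left hmid₂ ht0]
  · have hchord := hconv.2 (right_mem_Icc.2 hab) (left_mem_Icc.2 hab) ht0 (sub_nonneg.2 ht1)
      (add_sub_cancel t 1)
    rw [smul_eq_mul, smul_eq_mul, smul_eq_mul, smul_eq_mul] at hchord
    linarith [mul_le_mul_of_nonneg_left havg₁ (sub_nonneg.2 ht1),
      mul_le_mul_of_nonneg_left havg₂ ht0]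
end

section
/- For positive reals a, b with a ≠ b and t ∈ (0,1): a^(1-t)·b^t ≤ (1/(log a − log b))·((1−t)/t · a^(1-t)(a^t − b^t) + t/(1−t) · b^t(a^(1-t) − b^(1-t))) ≤ (1−t)a + t·b. -/
open Set

private lemma aux_g {w : ℝ} (hw : 1 ≤ w) : 2 * Real.log w ≤ w - w⁻¹ := by
  set g : ℝ → ℝ := fun x => x - x⁻¹ - 2 * Real.log x with hgdef
  have hder : ∀ x ∈ Set.Ioi (1:ℝ), HasDerivAt g (1 - (-(x^2)⁻¹) - 2 * x⁻¹) x := by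
    intro x hx
    have hx0 : x ≠ 0 := by have : (1:ℝ) < x := hx; positivity
    exact ((hasDerivAt_id x).sub (hasDerivAt_inv hx0)).sub
      ((Real.hasDerivAt_log hx0).const_mul 2)
  have hmono : MonotoneOn g (Set.Ici 1) := by
    apply monotoneOn_of_deriv_nonneg (convex_Ici 1)
    · apply ContinuousOn.sub (ContinuousOn.sub continuousOn_id ?_) ?_
      · exact ContinuousOn.inv₀ continuousOn_id (fun x hx => by
          have : (1:ℝ) ≤ x := hx; positivity)
      · exact continuousOn_const.mul (Real.continuousOn_log.mono (fun x hx => by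
          have : (1:ℝ) ≤ x := hx
          simp only [Set.mem_compl_iff, Set.mem_singleton_iff]
          positivity))
    · rw [interior_Ici]
      intro x hx
      exact ((hder x hx).differentiableAt).differentiableWithinAt
    · rw [interior_Ici]
      intro x hx
      rw [(hder x hx).deriv]
      have hx1 : (1:ℝ) < x := hx
      have hx0 : 0 < x := by positivity
      have h1 : x⁻¹ * x = 1 := inv_mul_cancel₀ (ne_of_gt hx0)
      have h2 : (x^2)⁻¹ = x⁻¹ * x⁻¹ := by rw [sq, mul_inv]
      nlinarith [sq_nonneg (1 - x⁻¹), h2]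
  have h0 : g 1 ≤ g w := hmono (by simp) hw hw
  simp [hgdef] at h0
  linarith

private lemma aux_f {u : ℝ} (hu : 1 ≤ u) : 2 * (u - 1) ≤ (u + 1) * Real.log u := by
  set f : ℝ → ℝ := fun x => (x + 1) * Real.log x - 2 * (x - 1) with hfdef
  have hder : ∀ x ∈ Set.Ioi (1:ℝ), HasDerivAt f (1 * Real.log x + (x + 1) * x⁻¹ - 2 * 1) x := by
    intro x hx
    have hx0 : x ≠ 0 := by have : (1:ℝ) < x := hx; positivity
    exact (((hasDerivAt_id x).add_const 1).mul (Real.hasDerivAt_log hx0)).sub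
      (((hasDerivAt_id x).sub_const 1).const_mul 2)
  have hmono : MonotoneOn f (Set.Ici 1) := by
    apply monotoneOn_of_deriv_nonneg (convex_Ici 1)
    · apply ContinuousOn.sub
      · exact (continuousOn_id.add continuousOn_const).mul
          (Real.continuousOn_log.mono (fun x hx => by
            have : (1:ℝ) ≤ x := hx
            simp only [Set.mem_compl_iff, Set.mem_singleton_iff]
            positivity))
      · exact (continuous_const.mul (continuous_id.sub continuous_const)).continuousOn
    · rw [interior_Ici]
      intro x hx
      exact ((hder x hx).differentiableAt).differentiableWithinAt
    · rw [interior_Ici]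
      intro x hx
      rw [(hder x hx).deriv]
      have hx1 : (1:ℝ) < x := hx
      have hx0 : 0 < x := by positivity
      have hlog : Real.log x⁻¹ ≤ x⁻¹ - 1 := Real.log_le_sub_one_of_pos (by positivity)
      rw [Real.log_inv] at hlog
      have h1 : (x + 1) * x⁻¹ = 1 + x⁻¹ := by field_simp
      nlinarith
  have h0 : f 1 ≤ f u := hmono (by simp) hu hu
  simp [hfdef] at h0
  linarith

private lemma aux_g' {u : ℝ} (hu : 1 ≤ u) : Real.sqrt u * Real.log u ≤ u - 1 := by
  have hu0 : 0 < u := lt_of_lt_of_le one_pos hu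
  have hw : 1 ≤ Real.sqrt u := by
    rw [show (1:ℝ) = Real.sqrt 1 by simp]
    exact Real.sqrt_le_sqrt hu
  have hw0 : 0 < Real.sqrt u := lt_of_lt_of_le one_pos hw
  have h := aux_g hw
  rw [Real.log_sqrt hu0.le] at h
  have hww : Real.sqrt u * Real.sqrt u = u := Real.mul_self_sqrt hu0.le
  have hinv : Real.sqrt u * (Real.sqrt u)⁻¹ = 1 := mul_inv_cancel₀ (ne_of_gt hw0)
  nlinarith [mul_le_mul_of_nonneg_left h hw0.le]

private lemma logmean_ord {x y : ℝ} (hy : 0 < y) (hxy : y < x) :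
    Real.sqrt (x * y) * (Real.log x - Real.log y) ≤ x - y ∧
      x - y ≤ (x + y) / 2 * (Real.log x - Real.log y) := by
  have hx : 0 < x := hy.trans hxy
  have hu : 1 ≤ x / y := (one_le_div hy).2 hxy.le
  have hlog : Real.log (x / y) = Real.log x - Real.log y :=
    Real.log_div (ne_of_gt hx) (ne_of_gt hy)
  have hsy : Real.sqrt y * Real.sqrt y = y := Real.mul_self_sqrt hy.le
  have hsy0 : Real.sqrt y ≠ 0 := ne_of_gt (Real.sqrt_pos.2 hy)
  have key : y * Real.sqrt (x / y) = Real.sqrt (x * y) := by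
    rw [Real.sqrt_div hx.le, Real.sqrt_mul hx.le]
    field_simp
    nlinarith [Real.sqrt_nonneg x]
  constructor
  · have h := mul_le_mul_of_nonneg_left (aux_g' hu) hy.le
    rw [hlog] at h
    calc Real.sqrt (x * y) * (Real.log x - Real.log y)
        = y * (Real.sqrt (x / y) * (Real.log x - Real.log y)) := by rw [← key]; ring
      _ ≤ y * (x / y - 1) := h
      _ = x - y := by field_simp
  · have h := mul_le_mul_of_nonneg_left (aux_f hu) hy.le
    rw [hlog] at h
    have h1 : y * (2 * (x / y - 1)) = 2 * (x - y) := by field_simp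
    have h2 : y * ((x / y + 1) * (Real.log x - Real.log y))
        = (x + y) * (Real.log x - Real.log y) := by field_simp
    rw [h1, h2] at h
    linarith

private lemma logmean_div {x y : ℝ} (hx : 0 < x) (hy : 0 < y) (hxy : x ≠ y) :
    Real.sqrt (x * y) ≤ (x - y) / (Real.log x - Real.log y) ∧
      (x - y) / (Real.log x - Real.log y) ≤ (x + y) / 2 := by
  rcases hxy.lt_or_gt with h | h
  · have hb := logmean_ord hx h
    rw [mul_comm y x] at hb
    have hl : 0 < Real.log y - Real.log x := sub_pos.2 (Real.log_lt_log hx h)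
    have hq : (x - y) / (Real.log x - Real.log y) = (y - x) / (Real.log y - Real.log x) := by
      rw [← neg_sub x y, ← neg_sub (Real.log x), neg_div_neg_eq]
    rw [hq]
    exact ⟨(le_div_iff₀ hl).2 hb.1, (div_le_iff₀ hl).2 (by linarith [hb.2])⟩
  · have hb := logmean_ord hy h
    have hl : 0 < Real.log x - Real.log y := sub_pos.2 (Real.log_lt_log hy h)
    exact ⟨(le_div_iff₀ hl).2 hb.1, (div_le_iff₀ hl).2 (by linarith [hb.2])⟩

/-- The weighted logarithmic mean lies between the weighted geometric mean and the
weighted arithmetic mean. -/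
theorem geom_le_weighted_log_le_arith (a b t : ℝ) (ha : 0 < a) (hb : 0 < b)
    (hab : a ≠ b) (ht : t ∈ Ioo (0:ℝ) 1) :
    a ^ (1 - t) * b ^ t ≤
      (1 / (Real.log a - Real.log b)) *
        ((1 - t) / t * (a ^ (1 - t) * (a ^ t - b ^ t)) +
          t / (1 - t) * (b ^ t * (a ^ (1 - t) - b ^ (1 - t)))) ∧
    (1 / (Real.log a - Real.log b)) *
        ((1 - t) / t * (a ^ (1 - t) * (a ^ t - b ^ t)) +
          t / (1 - t) * (b ^ t * (a ^ (1 - t) - b ^ (1 - t)))) ≤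
      (1 - t) * a + t * b := by
  obtain ⟨ht0, ht1⟩ := ht
  have ht1' : 0 < 1 - t := by linarith
  set G := a ^ (1 - t) * b ^ t with hGdef
  have hGpos : 0 < G := by positivity
  clear_value G
  have hlogG : Real.log G = (1 - t) * Real.log a + t * Real.log b := by
    rw [hGdef, Real.log_mul (by positivity) (by positivity), Real.log_rpow ha,
      Real.log_rpow hb]
  have hlab : Real.log a ≠ Real.log b := fun h =>
    hab (Real.log_injOn_pos (Set.mem_Ioi.2 ha) (Set.mem_Ioi.2 hb) h)
  have hL : Real.log a - Real.log b ≠ 0 := sub_ne_zero.2 hlab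
  have hGa : a ≠ G := by
    intro h
    have h2 : Real.log a = Real.log G := by rw [← h]
    rw [hlogG] at h2
    have h3 : t * (Real.log a - Real.log b) = 0 := by linear_combination h2
    exact hL ((mul_eq_zero.1 h3).resolve_left (ne_of_gt ht0))
  have hGb : G ≠ b := by
    intro h
    have h2 : Real.log G = Real.log b := by rw [h]
    rw [hlogG] at h2
    have h3 : (1 - t) * (Real.log a - Real.log b) = 0 := by linear_combination h2
    exact hL ((mul_eq_zero.1 h3).resolve_left (ne_of_gt ht1'))
  have hla : Real.log a - Real.log G = t * (Real.log a - Real.log b) := by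
    rw [hlogG]; ring
  have hlb : Real.log G - Real.log b = (1 - t) * (Real.log a - Real.log b) := by
    rw [hlogG]; ring
  have e1 : a ^ (1 - t) * a ^ t = a := by
    rw [← Real.rpow_add ha]; norm_num
  have e2 : b ^ t * b ^ (1 - t) = b := by
    rw [← Real.rpow_add hb]; norm_num
  have h1 : a ^ (1 - t) * (a ^ t - b ^ t) = a - G := by
    rw [mul_sub, e1, hGdef]
  have h2 : b ^ t * (a ^ (1 - t) - b ^ (1 - t)) = G - b := by
    rw [mul_sub, e2, hGdef]; ring
  have hE : (1 / (Real.log a - Real.log b)) *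
        ((1 - t) / t * (a ^ (1 - t) * (a ^ t - b ^ t)) +
          t / (1 - t) * (b ^ t * (a ^ (1 - t) - b ^ (1 - t))))
      = (1 - t) * ((a - G) / (Real.log a - Real.log G))
        + t * ((G - b) / (Real.log G - Real.log b)) := by
    rw [h1, h2, hla, hlb]
    field_simp
  have B1 := logmean_div ha hGpos hGa
  have B2 := logmean_div hGpos hb hGb
  have amgm : G ≤ (1 - t) * Real.sqrt (a * G) + t * Real.sqrt (G * b) := by
    have h := Real.geom_mean_le_arith_mean2_weighted ht1'.le ht0.le
      (Real.sqrt_nonneg (a * G)) (Real.sqrt_nonneg (G * b)) (by ring)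
    refine le_trans (le_of_eq ?_) h
    have hpos2 : 0 < Real.sqrt (a * G) ^ (1 - t) * Real.sqrt (G * b) ^ t := by positivity
    refine Real.log_injOn_pos (Set.mem_Ioi.2 hGpos) (Set.mem_Ioi.2 hpos2) ?_
    rw [Real.log_mul (by positivity) (by positivity),
      Real.log_rpow (by positivity), Real.log_rpow (by positivity),
      Real.log_sqrt (by positivity), Real.log_sqrt (by positivity),
      Real.log_mul (ne_of_gt ha) (ne_of_gt hGpos),
      Real.log_mul (ne_of_gt hGpos) (ne_of_gt hb), hlogG]
    ring
  have amgm2 : G ≤ (1 - t) * a + t * b := hGdef ▸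
    Real.geom_mean_le_arith_mean2_weighted ht1'.le ht0.le ha.le hb.le (by ring)
  rw [hE]
  constructor
  · calc G ≤ (1 - t) * Real.sqrt (a * G) + t * Real.sqrt (G * b) := amgm
      _ ≤ (1 - t) * ((a - G) / (Real.log a - Real.log G))
          + t * ((G - b) / (Real.log G - Real.log b)) :=
        add_le_add (mul_le_mul_of_nonneg_left B1.1 ht1'.le)
          (mul_le_mul_of_nonneg_left B2.1 ht0.le)
  · calc (1 - t) * ((a - G) / (Real.log a - Real.log G))
          + t * ((G - b) / (Real.log G - Real.log b))
        ≤ (1 - t) * ((a + G) / 2) + t * ((G + b) / 2) :=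
        add_le_add (mul_le_mul_of_nonneg_left B1.2 ht1'.le)
          (mul_le_mul_of_nonneg_left B2.2 ht0.le)
      _ = ((1 - t) * a + t * b + G) / 2 := by ring
      _ ≤ (1 - t) * a + t * b := by linarith
end

section
/- For positive reals a ≠ b, lim_{t→0⁺} L_t(a,b) = a and lim_{t→1⁻} L_t(a,b) = b, where L_t(a,b) = (1/(log a − log b))·((1−t)/t · a^(1-t)(a^t − b^t) + t/(1−t) · b^t(a^(1-t) − b^(1-t))). -/
/-!
As `t → 0⁺` the second summand of `L_t(a, b)` vanishes, while in the first one
`(a ^ t - b ^ t) / t` tends to `log a - log b`, the derivative of `t ↦ a ^ t - b ^ t` at `0`;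
so `L_t(a, b) → a`. The limit at `1` follows from the symmetry `L_{1-t}(b, a) = L_t(a, b)`.
-/

open Set Filter Topology

noncomputable def weightedLogMean (a b t : ℝ) : ℝ :=
  (1 / (Real.log a - Real.log b)) *
    ((1 - t) / t * (a ^ (1 - t) * (a ^ t - b ^ t)) +
      t / (1 - t) * (b ^ t * (a ^ (1 - t) - b ^ (1 - t))))

theorem weightedLogMean_swap (a b t : ℝ) :
    weightedLogMean b a (1 - t) = weightedLogMean a b t := by
  rw [weightedLogMean, weightedLogMean, sub_sub_cancel,
    ← neg_sub (Real.log a), div_neg, neg_mul, ← mul_neg]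
  ring

theorem tendsto_rpow_sub_rpow_div_nhdsNE_zero {a b : ℝ} (ha : 0 < a) (hb : 0 < b) :
    Tendsto (fun t : ℝ => (a ^ t - b ^ t) / t) (𝓝[≠] 0) (𝓝 (Real.log a - Real.log b)) := by
  have hderiv : HasDerivAt (fun t : ℝ => a ^ t - b ^ t) (Real.log a - Real.log b) 0 := by
    have := (Real.hasStrictDerivAt_const_rpow ha 0).hasDerivAt.sub
      (Real.hasStrictDerivAt_const_rpow hb 0).hasDerivAt
    simp only [Real.rpow_zero, one_mul] at this
    exact this
  refine (hasDerivAt_iff_tendsto_slope.1 hderiv).congr fun t => ?_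
  simp [slope_def_field]

theorem tendsto_weightedLogMean_nhdsGT_zero {a b : ℝ} (ha : 0 < a) (hb : 0 < b) (hab : a ≠ b) :
    Tendsto (weightedLogMean a b) (𝓝[>] 0) (𝓝 a) := by
  have hlog : Real.log a - Real.log b ≠ 0 :=
    sub_ne_zero.2 fun h => hab (Real.log_injOn_pos ha hb h)
  have hfirst : Tendsto (fun t : ℝ => (1 - t) * a ^ (1 - t) * ((a ^ t - b ^ t) / t))
      (𝓝[>] 0) (𝓝 (a * (Real.log a - Real.log b))) := by
    have hweight : ContinuousAt (fun t : ℝ => (1 - t) * a ^ (1 - t)) 0 := by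
      fun_prop (disch := positivity)
    refine Tendsto.mul ?_ ((tendsto_rpow_sub_rpow_div_nhdsNE_zero ha hb).mono_left
      (nhdsWithin_mono _ fun t (ht : 0 < t) => ht.ne'))
    simpa using hweight.tendsto.mono_left nhdsWithin_le_nhds
  have hsecond : Tendsto (fun t : ℝ => t / (1 - t) * (b ^ t * (a ^ (1 - t) - b ^ (1 - t))))
      (𝓝[>] 0) (𝓝 0) := by
    have hcont : ContinuousAt (fun t : ℝ => t / (1 - t) * (b ^ t * (a ^ (1 - t) - b ^ (1 - t)))) 0 := by
      fun_prop (disch := first | positivity | norm_num)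
    simpa using hcont.tendsto.mono_left nhdsWithin_le_nhds
  have hlim := (hfirst.add hsecond).const_mul (1 / (Real.log a - Real.log b))
  rw [add_zero, one_div_mul_eq_div, mul_div_cancel_right₀ a hlog] at hlim
  refine hlim.congr' ?_
  filter_upwards [self_mem_nhdsWithin] with t (ht : 0 < t)
  rw [weightedLogMean]
  field_simp

theorem tendsto_one_sub_nhdsLT_one : Tendsto (fun t : ℝ => 1 - t) (𝓝[<] 1) (𝓝[>] 0) := by
  refine tendsto_nhdsWithin_iff.2 ⟨?_, ?_⟩
  · exact ((continuous_sub_left 1).tendsto' 1 0 (sub_self 1)).mono_left nhdsWithin_le_nhds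
  · filter_upwards [self_mem_nhdsWithin] with t (ht : t < 1) using sub_pos.2 ht

theorem tendsto_weightedLogMean_nhdsLT_one {a b : ℝ} (ha : 0 < a) (hb : 0 < b) (hab : a ≠ b) :
    Tendsto (weightedLogMean a b) (𝓝[<] 1) (𝓝 b) :=
  ((tendsto_weightedLogMean_nhdsGT_zero hb ha hab.symm).comp tendsto_one_sub_nhdsLT_one).congr
    (weightedLogMean_swap a b)

/-- `lim_{t→0⁺} L_t(a,b) = a` and `lim_{t→1⁻} L_t(a,b) = b` for the weighted
logarithmic mean `L_t`. -/
theorem weighted_log_mean_limits (a b : ℝ) (ha : 0 < a) (hb : 0 < b) (hab : a ≠ b) :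
    Tendsto (fun t : ℝ =>
        (1 / (Real.log a - Real.log b)) *
          ((1 - t) / t * (a ^ (1 - t) * (a ^ t - b ^ t)) +
            t / (1 - t) * (b ^ t * (a ^ (1 - t) - b ^ (1 - t)))))
      (𝓝[>] (0:ℝ)) (𝓝 a) ∧
    Tendsto (fun t : ℝ =>
        (1 / (Real.log a - Real.log b)) *
          ((1 - t) / t * (a ^ (1 - t) * (a ^ t - b ^ t)) +
            t / (1 - t) * (b ^ t * (a ^ (1 - t) - b ^ (1 - t)))))
      (𝓝[<] (1:ℝ)) (𝓝 b) :=
  ⟨tendsto_weightedLogMean_nhdsGT_zero ha hb hab, tendsto_weightedLogMean_nhdsLT_one ha hb hab⟩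
end

section
/- There exist positive reals a ≠ b and t ∈ (0,1) such that L_t(a,b) > (2/3)·a^(1−t)b^t + (1/3)·((1−t)a + t·b). For instance a = 706, b = 31.8, t = 0.2169 is such an example. -/
open Set

lemma log_three_lt : Real.log 3 < 128/115 := by
  have he9 : Real.exp 1 > 2.7182818283 := Real.exp_one_gt_d9
  have he9' : Real.exp 1 < 2.7182818286 := Real.exp_one_lt_d9
  have hepos : (0:ℝ) < Real.exp 1 := Real.exp_pos 1
  have hne : (3:ℝ) / Real.exp 1 ≠ 1 := by
    intro h
    have : Real.exp 1 = 3 := by field_simp at h; linarith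
    linarith
  have h1 : Real.log (3 / Real.exp 1) < 3 / Real.exp 1 - 1 :=
    Real.log_lt_sub_one_of_pos (by positivity) hne
  have h2 : Real.log (3 / Real.exp 1) = Real.log 3 - 1 := by
    rw [Real.log_div (by norm_num) (Real.exp_ne_zero 1), Real.log_exp]
  have h3 : Real.log 3 < 3 / Real.exp 1 := by linarith
  have h4 : (3:ℝ) / Real.exp 1 < 128/115 := by
    rw [div_lt_iff₀ hepos]; nlinarith
  linarith

/-- The weighted logarithmic mean can exceed the weighted Heronian mean:
there exist `a ≠ b > 0` and `t ∈ (0,1)` with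
`L_t(a,b) > (2/3) a^(1-t) b^t + (1/3)((1-t)a + t b)`
(for instance `a = 706`, `b = 31.8`, `t = 0.2169`). -/
theorem weighted_log_mean_gt_heronian :
    ∃ a b t : ℝ, 0 < a ∧ 0 < b ∧ a ≠ b ∧ t ∈ Ioo (0:ℝ) 1 ∧
      (1 / (Real.log a - Real.log b)) *
          ((1 - t) / t * (a ^ (1 - t) * (a ^ t - b ^ t)) +
            t / (1 - t) * (b ^ t * (a ^ (1 - t) - b ^ (1 - t)))) >
        (2/3 : ℝ) * (a ^ (1 - t) * b ^ t) + (1/3 : ℝ) * ((1 - t) * a + t * b) := by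
  refine ⟨81, 1, 1/4, by norm_num, by norm_num, by norm_num, ⟨by norm_num, by norm_num⟩, ?_⟩
  have h81 : (81:ℝ) = 3 ^ (4:ℕ) := by norm_num
  have ht : (81:ℝ) ^ ((1:ℝ)/4) = 3 := by
    rw [h81, ← Real.rpow_natCast 3 4, ← Real.rpow_mul (by norm_num)]
    norm_num
  have hs : (81:ℝ) ^ (1 - (1:ℝ)/4) = 27 := by
    rw [h81, ← Real.rpow_natCast 3 4, ← Real.rpow_mul (by norm_num)]
    norm_num
  have hlog : Real.log 81 = 4 * Real.log 3 := by
    rw [h81, Real.log_pow]; norm_num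
  have hL3 : 0 < Real.log 3 := Real.log_pos (by norm_num)
  rw [ht, hs, Real.one_rpow, Real.one_rpow, Real.log_one, hlog]
  have hgoal : (2/3 : ℝ) * (27 * 1) + (1/3 : ℝ) * ((1 - 1/4) * 81 + 1/4 * 1) = 115/3 := by
    norm_num
  rw [gt_iff_lt, hgoal]
  have hden : (0:ℝ) < 4 * Real.log 3 := by linarith
  have hexp : (1 - 1/4 : ℝ) / (1/4) * (27 * (3 - 1)) +
      (1/4 : ℝ) / (1 - 1/4) * (1 * (27 - 1)) = 512/3 := by norm_num
  rw [sub_zero, hexp, one_div, inv_mul_eq_div, lt_div_iff₀ hden]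
  nlinarith [log_three_lt]
end

section
/- For x ≥ 0, x ≠ 1, and t ∈ (0,1), the function f_t(x) := (1/log x)·((1−t)/t·(x^t − 1) + t/(1−t)·x^t(x^(1−t) − 1)) satisfies x^t ≤ f_t(x) ≤ (1/2)(x^t + 1 − t + t·x). -/
/-!
Writing `L a b = (a - b) / (log a - log b)` for the logarithmic mean, `f_t` splits as
`(1 - t) L(x^t, 1) + t L(x, x^t)`. The classical bounds `√(ab) ≤ L(a, b) ≤ (a + b) / 2` bound the
two summands; the arithmetic means add up to the upper bound, and the weighted AM-GM inequality
turns `(1 - t) x^(t/2) + t x^((1+t)/2)` into the lower bound `x^t`.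
-/

open Real Set

-- `u ≤ sinh u` at `u = log s`.
lemma two_mul_log_le_sub_inv {s : ℝ} (hs : 1 ≤ s) : 2 * log s ≤ s - s⁻¹ := by
  have h := self_le_sinh_iff.2 (log_nonneg hs)
  rw [sinh_log (by linarith)] at h
  linarith

-- The left side is the first term of the nonnegative series `∑ 2 / (2k+1) (a / (a+2))^(2k+1)`
-- for `log (1 + a)`.
lemma two_mul_div_add_two_le_log_one_add {a : ℝ} (ha : 0 ≤ a) :
    2 * a / (a + 2) ≤ log (1 + a) := by
  have h := le_hasSum (hasSum_log_one_add ha) 0 fun k _ => by positivity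
  simpa [mul_div_assoc] using h

noncomputable def logMean (a b : ℝ) : ℝ := (a - b) / (log a - log b)

lemma logMean_comm (a b : ℝ) : logMean a b = logMean b a := by
  rw [logMean, logMean, ← neg_sub, ← neg_sub (log b), neg_div_neg_eq]

lemma logMean_mul_mul {c a b : ℝ} (hc : 0 < c) (ha : 0 < a) (hb : 0 < b) :
    logMean (c * a) (c * b) = c * logMean a b := by
  rw [logMean, logMean, log_mul hc.ne' ha.ne', log_mul hc.ne' hb.ne', ← mul_sub, mul_div_assoc]
  congr 2
  ring

lemma logMean_one_right (y : ℝ) : logMean y 1 = (y - 1) / log y := by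
  rw [logMean, log_one, sub_zero]

lemma sqrt_le_logMean_one {y : ℝ} (hy : 1 < y) : √y ≤ logMean y 1 := by
  have hs : 1 ≤ √y := one_le_sqrt.2 hy.le
  have key := mul_le_mul_of_nonneg_left (two_mul_log_le_sub_inv hs) (by positivity : 0 ≤ √y)
  rw [logMean_one_right, le_div_iff₀ (log_pos hy)]
  calc √y * log y = √y * (2 * log √y) := by rw [log_sqrt (by linarith)]; ring
    _ ≤ √y * (√y - (√y)⁻¹) := key
    _ = y - 1 := by rw [mul_sub, mul_inv_cancel₀ (by positivity), mul_self_sqrt (by linarith)]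

lemma logMean_one_le {y : ℝ} (hy : 1 < y) : logMean y 1 ≤ (y + 1) / 2 := by
  have key := two_mul_div_add_two_le_log_one_add (sub_nonneg.2 hy.le)
  rw [add_sub_cancel, show y - 1 + 2 = y + 1 by ring, div_le_iff₀ (by linarith)] at key
  rw [logMean_one_right, div_le_iff₀ (log_pos hy)]
  linarith

lemma logMean_eq_mul_logMean_div {a b : ℝ} (ha : 0 < a) (hb : 0 < b) :
    logMean a b = b * logMean (a / b) 1 := by
  rw [← logMean_mul_mul hb (div_pos ha hb) one_pos, mul_div_cancel₀ _ hb.ne', mul_one]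

lemma sqrt_mul_le_logMean {a b : ℝ} (ha : 0 < a) (hb : 0 < b) (hab : a ≠ b) :
    √(a * b) ≤ logMean a b := by
  wlog h : b < a generalizing a b
  · rw [logMean_comm, mul_comm]
    exact this hb ha hab.symm (lt_of_le_of_ne (not_lt.1 h) hab)
  have hy : 1 < a / b := (one_lt_div hb).2 h
  calc √(a * b) = b * √(a / b) := by
        rw [show a * b = b ^ 2 * (a / b) by field_simp, sqrt_mul (by positivity),
          sqrt_sq hb.le]
    _ ≤ b * logMean (a / b) 1 := mul_le_mul_of_nonneg_left (sqrt_le_logMean_one hy) hb.le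
    _ = logMean a b := (logMean_eq_mul_logMean_div ha hb).symm

lemma logMean_le_add_div_two {a b : ℝ} (ha : 0 < a) (hb : 0 < b) (hab : a ≠ b) :
    logMean a b ≤ (a + b) / 2 := by
  wlog h : b < a generalizing a b
  · rw [logMean_comm, add_comm]
    exact this hb ha hab.symm (lt_of_le_of_ne (not_lt.1 h) hab)
  have hy : 1 < a / b := (one_lt_div hb).2 h
  calc logMean a b = b * logMean (a / b) 1 := logMean_eq_mul_logMean_div ha hb
    _ ≤ b * ((a / b + 1) / 2) := mul_le_mul_of_nonneg_left (logMean_one_le hy) hb.le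
    _ = (a + b) / 2 := by field_simp

lemma rep_fun_weighted_log_eq_logMean {x t : ℝ} (hx : 0 < x) (hx1 : x ≠ 1) (ht0 : 0 < t) (ht1 : t < 1) :
    (1 / log x) * ((1 - t) / t * (x ^ t - 1) + t / (1 - t) * (x ^ t * (x ^ (1 - t) - 1))) =
      (1 - t) * logMean (x ^ t) 1 + t * logMean x (x ^ t) := by
  have hL : log x ≠ 0 := log_ne_zero_of_pos_of_ne_one hx hx1
  have hsplit : x ^ t * x ^ (1 - t) = x := by rw [← rpow_add hx]; norm_num
  have ht1' : 1 - t ≠ 0 := by linarith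
  rw [logMean, logMean, log_rpow hx, log_one, sub_zero]
  field_simp
  linear_combination t ^ 2 * hsplit

lemma rpow_le_weighted_sqrt {x t : ℝ} (hx : 0 < x) (ht0 : 0 ≤ t) (ht1 : t ≤ 1) :
    x ^ t ≤ (1 - t) * √(x ^ t * 1) + t * √(x * x ^ t) := by
  have amgm := geom_mean_le_arith_mean2_weighted (sub_nonneg.2 ht1) ht0
    (sqrt_nonneg (x ^ t * 1)) (sqrt_nonneg (x * x ^ t)) (sub_add_cancel 1 t)
  refine le_trans (le_of_eq ?_) amgm
  rw [mul_one, ← rpow_one_add' hx.le (by linarith), sqrt_eq_rpow, sqrt_eq_rpow,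
    ← rpow_mul hx.le, ← rpow_mul hx.le, ← rpow_mul hx.le, ← rpow_mul hx.le, ← rpow_add hx]
  congr 1
  ring

/-- The representing function `f_t` of the weighted logarithmic mean satisfies
`x^t ≤ f_t(x) ≤ (1/2)(x^t + 1 - t + t x)`. -/
theorem rep_fun_weighted_log_bounds (x t : ℝ) (hx : 0 ≤ x) (hx1 : x ≠ 1)
    (ht : t ∈ Ioo (0:ℝ) 1) :
    x ^ t ≤
      (1 / Real.log x) *
        ((1 - t) / t * (x ^ t - 1) + t / (1 - t) * (x ^ t * (x ^ (1 - t) - 1))) ∧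
    (1 / Real.log x) *
        ((1 - t) / t * (x ^ t - 1) + t / (1 - t) * (x ^ t * (x ^ (1 - t) - 1))) ≤
      (1/2 : ℝ) * (x ^ t + 1 - t + t * x) := by
  obtain ⟨ht0, ht1⟩ := ht
  rcases hx.eq_or_lt with rfl | hx0
  · simpa [zero_rpow ht0.ne'] using ht1.le
  rw [rep_fun_weighted_log_eq_logMean hx0 hx1 ht0 ht1]
  have hxt : 0 < x ^ t := rpow_pos_of_pos hx0 t
  have hxt1 : x ^ t ≠ 1 := by
    simpa [rpow_zero] using (rpow_right_inj hx0 hx1 (y := t) (z := 0)).not.2 ht0.ne'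
  have hxxt : x ≠ x ^ t := by
    simpa [rpow_one] using (rpow_right_inj hx0 hx1 (y := 1) (z := t)).not.2 ht1.ne'
  constructor
  · calc x ^ t ≤ (1 - t) * √(x ^ t * 1) + t * √(x * x ^ t) :=
          rpow_le_weighted_sqrt hx0 ht0.le ht1.le
      _ ≤ _ := by
          gcongr
          · exact sqrt_mul_le_logMean hxt one_pos hxt1
          · exact sqrt_mul_le_logMean hx0 hxt hxxt
  · calc _ ≤ (1 - t) * ((x ^ t + 1) / 2) + t * ((x + x ^ t) / 2) := by
          gcongr
          · exact logMean_le_add_div_two hxt one_pos hxt1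
          · exact logMean_le_add_div_two hx0 hxt hxxt
      _ = _ := by ring
end

section
/- Let A, B be positive invertible operators (or positive definite matrices) and t ∈ (0,1). Then A♯ₜB ≤ A ℓₜ B ≤ (1/2)(A♯ₜB + A∇ₜB) ≤ A∇ₜB, where A♯ₜB = A^{1/2}(A^{-1/2}BA^{-1/2})^t A^{1/2}, A∇ₜB = (1−t)A + tB, and A ℓₜ B = A^{1/2} f_t(A^{-1/2}BA^{-1/2}) A^{1/2} with f_t(x) = ((1−t)/t)∫₀ᵗ x^α dα + (t/(1−t))∫ₜ¹ x^α dα. -/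
open Set MeasureTheory

variable {H : Type*} [NormedAddCommGroup H] [InnerProductSpace ℂ H] [CompleteSpace H]

/-- The Kubo–Ando operator mean with representing function `f`:
`A σ B = A^{1/2} f(A^{-1/2} B A^{-1/2}) A^{1/2}`. -/
noncomputable def opMean (f : ℝ → ℝ) (A B : H →L[ℂ] H) : H →L[ℂ] H :=
  cfc Real.sqrt A *
    cfc f (cfc (fun x : ℝ => x ^ (-(1:ℝ)/2)) A * B * cfc (fun x : ℝ => x ^ (-(1:ℝ)/2)) A) *
    cfc Real.sqrt A

/-- The weighted geometric operator mean `A ♯ₜ B`. -/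
noncomputable def weightedGeom (t : ℝ) (A B : H →L[ℂ] H) : H →L[ℂ] H :=
  opMean (fun x : ℝ => x ^ t) A B

/-- The weighted logarithmic operator mean `A ℓₜ B`, with representing function
`f_t(x) = ((1-t)/t)∫₀ᵗ x^α dα + (t/(1-t))∫ₜ¹ x^α dα`. -/
noncomputable def weightedLog (t : ℝ) (A B : H →L[ℂ] H) : H →L[ℂ] H :=
  opMean (fun x : ℝ => ((1 - t) / t) * (∫ α in (0:ℝ)..t, x ^ α) +
    (t / (1 - t)) * (∫ α in t..(1:ℝ), x ^ α)) A B

/-! Conjugating by `A ^ (1/2)` and applying the continuous functional calculus to the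
strictly positive operator `A ^ (-1/2) * B * A ^ (-1/2)` reduces all three inequalities to
scalar ones for `x > 0`: `x ^ t ≤ f_t x ≤ (x ^ t + (1 - t + t x)) / 2 ≤ 1 - t + t x`.
Each comes from convexity of `α ↦ x ^ α`: the Hermite–Hadamard inequalities on `[0, t]` and
`[t, 1]` squeeze `f_t x` between `(1 - t) x ^ (t/2) + t x ^ ((1 + t)/2) ≥ x ^ t` and the
stated average, and the last one is the chord inequality on `[0, 1]`. -/

theorem ConvexOn.mul_map_midpoint_le_intervalIntegral {f : ℝ → ℝ} {a b : ℝ} (hab : a ≤ b)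
    (hf : ConvexOn ℝ (Icc a b) f) (hfi : IntervalIntegrable f volume a b) :
    (b - a) * f ((a + b) / 2) ≤ ∫ x in a..b, f x := by
  -- Pair `x` with its reflection `a + b - x`, which leaves the integral unchanged.
  have hfi' : IntervalIntegrable (fun x => f (a + b - x)) volume a b := by
    simpa using (hfi.comp_sub_left (a + b)).symm
  have hpair : ∀ x ∈ Icc a b, 2 * f ((a + b) / 2) ≤ f x + f (a + b - x) := by
    intro x hx
    have hx' : a + b - x ∈ Icc a b := ⟨by linarith [hx.2], by linarith [hx.1]⟩
    have h := hf.2 hx hx' (by norm_num : (0:ℝ) ≤ 1 / 2) (by norm_num : (0:ℝ) ≤ 1 / 2)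
      (by norm_num)
    rw [smul_eq_mul, smul_eq_mul, smul_eq_mul, smul_eq_mul,
      show 1 / 2 * x + 1 / 2 * (a + b - x) = (a + b) / 2 by ring] at h
    linarith
  have h := intervalIntegral.integral_mono_on hab intervalIntegrable_const (hfi.add hfi') hpair
  rw [intervalIntegral.integral_const, intervalIntegral.integral_add hfi hfi',
    intervalIntegral.integral_comp_sub_left, add_sub_cancel_left, add_sub_cancel_right,
    smul_eq_mul] at h
  linarith

theorem ConvexOn.intervalIntegral_le_mul_endpoints {f : ℝ → ℝ} {a b : ℝ} (hab : a ≤ b)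
    (hf : ConvexOn ℝ (Icc a b) f) (hfi : IntervalIntegrable f volume a b) :
    ∫ x in a..b, f x ≤ (b - a) * ((f a + f b) / 2) := by
  rcases hab.eq_or_lt with rfl | hab
  · simp
  have hfi' : IntervalIntegrable (fun x => f (a + b - x)) volume a b := by
    simpa using (hfi.comp_sub_left (a + b)).symm
  have hpair : ∀ x ∈ Icc a b, f x + f (a + b - x) ≤ f a + f b := by
    intro x hx
    have hba : 0 < b - a := sub_pos.2 hab
    have hl : 0 ≤ (b - x) / (b - a) := div_nonneg (by linarith [hx.2]) hba.le
    have hr : 0 ≤ (x - a) / (b - a) := div_nonneg (by linarith [hx.1]) hba.le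
    have hsum : (b - x) / (b - a) + (x - a) / (b - a) = 1 := by field_simp; ring
    have h₁ := hf.2 (left_mem_Icc.2 hab.le) (right_mem_Icc.2 hab.le) hl hr hsum
    have h₂ := hf.2 (left_mem_Icc.2 hab.le) (right_mem_Icc.2 hab.le) hr hl
      ((add_comm _ _).trans hsum)
    simp only [smul_eq_mul] at h₁ h₂
    rw [show (b - x) / (b - a) * a + (x - a) / (b - a) * b = x by field_simp; ring] at h₁
    rw [show (x - a) / (b - a) * a + (b - x) / (b - a) * b = a + b - x by field_simp; ring] at h₂
    linear_combination h₁ + h₂ + (f a + f b) * hsum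
  have h := intervalIntegral.integral_mono_on hab.le (hfi.add hfi') intervalIntegrable_const hpair
  rw [intervalIntegral.integral_const, intervalIntegral.integral_add hfi hfi',
    intervalIntegral.integral_comp_sub_left, add_sub_cancel_left, add_sub_cancel_right,
    smul_eq_mul] at h
  linarith

theorem Real.rpow_le_one_sub_add_mul {x t : ℝ} (hx : 0 < x) (ht0 : 0 ≤ t) (ht1 : t ≤ 1) :
    x ^ t ≤ (1 - t) + t * x := by
  simpa using (convexOn_rpow_left hx).2 (mem_univ 0) (mem_univ 1) (sub_nonneg.2 ht1) ht0
    (sub_add_cancel 1 t)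

/-- The function `f_t` representing `ℓₜ`. -/
noncomputable def weightedLogFun (t x : ℝ) : ℝ :=
  ((1 - t) / t) * (∫ α in (0:ℝ)..t, x ^ α) + (t / (1 - t)) * (∫ α in t..(1:ℝ), x ^ α)

section weightedLogFun

open Real

variable {t x : ℝ}

theorem rpow_le_weightedLogFun (ht0 : 0 < t) (ht1 : t < 1) (hx : 0 < x) :
    x ^ t ≤ weightedLogFun t x := by
  have hconv (a b : ℝ) : ConvexOn ℝ (Icc a b) (fun α => x ^ α) :=
    (convexOn_rpow_left hx).subset (subset_univ _) (convex_Icc a b)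
  have hint (a b : ℝ) := (continuous_const_rpow hx.ne').intervalIntegrable (μ := volume) a b
  have h₁ := (hconv 0 t).mul_map_midpoint_le_intervalIntegral ht0.le (hint 0 t)
  have h₂ := (hconv t 1).mul_map_midpoint_le_intervalIntegral ht1.le (hint t 1)
  rw [sub_zero, zero_add] at h₁
  have ht1' : 1 - t ≠ 0 := by linarith
  calc x ^ t = x ^ ((1 - t) * (t / 2) + t * ((t + 1) / 2)) := by ring_nf
    _ ≤ (1 - t) * x ^ (t / 2) + t * x ^ ((t + 1) / 2) :=
      (convexOn_rpow_left hx).2 (mem_univ _) (mem_univ _) (by linarith) ht0.le (by ring)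
    _ = ((1 - t) / t) * (t * x ^ (t / 2)) + (t / (1 - t)) * ((1 - t) * x ^ ((t + 1) / 2)) := by
      field_simp
    _ ≤ weightedLogFun t x := by
      unfold weightedLogFun
      gcongr

theorem weightedLogFun_le (ht0 : 0 < t) (ht1 : t < 1) (hx : 0 < x) :
    weightedLogFun t x ≤ 1 / 2 * (x ^ t + ((1 - t) + t * x)) := by
  have hconv (a b : ℝ) : ConvexOn ℝ (Icc a b) (fun α => x ^ α) :=
    (convexOn_rpow_left hx).subset (subset_univ _) (convex_Icc a b)
  have hint (a b : ℝ) := (continuous_const_rpow hx.ne').intervalIntegrable (μ := volume) a b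
  have h₁ := (hconv 0 t).intervalIntegral_le_mul_endpoints ht0.le (hint 0 t)
  have h₂ := (hconv t 1).intervalIntegral_le_mul_endpoints ht1.le (hint t 1)
  rw [sub_zero, rpow_zero] at h₁
  rw [rpow_one] at h₂
  have ht1' : 1 - t ≠ 0 := by linarith
  calc weightedLogFun t x ≤ ((1 - t) / t) * (t * ((1 + x ^ t) / 2)) +
        (t / (1 - t)) * ((1 - t) * ((x ^ t + x) / 2)) := by
        unfold weightedLogFun
        gcongr
    _ = 1 / 2 * (x ^ t + ((1 - t) + t * x)) := by
      field_simp
      ring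

theorem continuousOn_weightedLogFun (t : ℝ) : ContinuousOn (weightedLogFun t) (Ioi 0) := by
  have hint (a b : ℝ) : ContinuousOn (fun x : ℝ => ∫ α in a..b, x ^ α) (Ioi 0) := by
    rw [continuousOn_iff_continuous_domRestrict]
    exact intervalIntegral.continuous_parametric_intervalIntegral_of_continuous'
      ((continuous_subtype_val.comp continuous_fst).rpow continuous_snd
        fun p => Or.inl (ne_of_gt p.1.2)) a b
  unfold weightedLogFun
  fun_prop (disch := assumption)

end weightedLogFun

namespace CFC

variable {A : Type*} [CStarAlgebra A] [PartialOrder A] [StarOrderedRing A]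

theorem cfc_real_sqrt_eq_rpow {a : A} (ha : 0 ≤ a) : cfc Real.sqrt a = a ^ (1 / 2 : ℝ) := by
  rw [← sqrt_eq_rpow, sqrt_eq_real_sqrt a ha, cfcₙ_eq_cfc]

theorem cfc_rpow_neg_half_eq_rpow {a : A} (ha : 0 ≤ a) :
    cfc (fun x : ℝ => x ^ (-(1:ℝ)/2)) a = a ^ (-(1 / 2) : ℝ) := by
  rw [rpow_eq_cfc_real ha, neg_div]

theorem spectrum_rpow_neg_half_conj_subset_Ioi {a b : A} (ha : IsStrictlyPositive a)
    (hb : IsStrictlyPositive b) :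
    spectrum ℝ (a ^ (-(1 / 2) : ℝ) * b * a ^ (-(1 / 2) : ℝ)) ⊆ Ioi 0 := fun _ hx =>
  (IsStrictlyPositive.conjugate_of_isUnit_of_isSelfAdjoint b _
    (IsStrictlyPositive.rpow a _ ha).isUnit).spectrum_pos hx

end CFC

open CFC

variable {A B : H →L[ℂ] H} {f g : ℝ → ℝ}

theorem opMean_eq_rpow (hA : 0 ≤ A) :
    opMean f A B = A ^ (1 / 2 : ℝ) * cfc f (A ^ (-(1 / 2) : ℝ) * B * A ^ (-(1 / 2) : ℝ)) *
      A ^ (1 / 2 : ℝ) := by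
  rw [opMean, cfc_real_sqrt_eq_rpow hA, cfc_rpow_neg_half_eq_rpow hA]

theorem opMean_mono (hf : ContinuousOn f (Ioi 0)) (hg : ContinuousOn g (Ioi 0))
    (hfg : ∀ x, 0 < x → f x ≤ g x) (hA : IsStrictlyPositive A) (hB : IsStrictlyPositive B) :
    opMean f A B ≤ opMean g A B := by
  have hspec := spectrum_rpow_neg_half_conj_subset_Ioi hA hB
  simp only [opMean_eq_rpow hA.nonneg]
  exact conjugate_le_conjugate_of_nonneg
    (cfc_mono (fun x hx => hfg x (hspec hx)) (hf.mono hspec) (hg.mono hspec)) rpow_nonneg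

theorem opMean_add (hf : ContinuousOn f (Ioi 0)) (hg : ContinuousOn g (Ioi 0))
    (hA : IsStrictlyPositive A) (hB : IsStrictlyPositive B) :
    opMean (fun x => f x + g x) A B = opMean f A B + opMean g A B := by
  have hspec := spectrum_rpow_neg_half_conj_subset_Ioi hA hB
  simp only [opMean_eq_rpow hA.nonneg]
  rw [cfc_add _ f g (hf.mono hspec) (hg.mono hspec), mul_add, add_mul]

theorem opMean_const_mul (c : ℝ) (hf : ContinuousOn f (Ioi 0))
    (hA : IsStrictlyPositive A) (hB : IsStrictlyPositive B) :
    opMean (fun x => c * f x) A B = c • opMean f A B := by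
  have hspec := spectrum_rpow_neg_half_conj_subset_Ioi hA hB
  simp only [opMean_eq_rpow hA.nonneg]
  rw [cfc_const_mul c f _ (hf.mono hspec), mul_smul_comm, smul_mul_assoc]

theorem opMean_affine (a b : ℝ) (hA : IsStrictlyPositive A) (hB : IsSelfAdjoint B) :
    opMean (fun x => a + b * x) A B = a • A + b • B := by
  have hC : IsSelfAdjoint (A ^ (-(1 / 2) : ℝ) * B * A ^ (-(1 / 2) : ℝ)) :=
    hB.conjugate_self rpow_nonneg.isSelfAdjoint
  rw [opMean_eq_rpow hA.nonneg, cfc_add _ _ _, cfc_const a _ hC, cfc_const_mul b _ _,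
    cfc_id' ℝ _ hC, Algebra.algebraMap_eq_smul_one]
  simp only [mul_add, add_mul, mul_smul_comm, smul_mul_assoc, mul_one, ← mul_assoc]
  rw [rpow_mul_rpow_neg _ hA, one_mul, mul_assoc, rpow_neg_mul_rpow _ hA, mul_one,
    ← sqrt_eq_rpow, sqrt_mul_sqrt_self A hA.nonneg]

/-- `A♯ₜB ≤ A ℓₜ B ≤ (1/2)(A♯ₜB + A∇ₜB) ≤ A∇ₜB` for positive invertible `A, B`. -/
theorem weighted_geom_log_heron_arith (t : ℝ) (ht : t ∈ Ioo (0:ℝ) 1)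
    (A B : H →L[ℂ] H) (hA : 0 ≤ A) (hA' : IsUnit A) (hB : 0 ≤ B) (hB' : IsUnit B) :
    weightedGeom t A B ≤ weightedLog t A B ∧
    weightedLog t A B ≤ (1/2 : ℝ) • (weightedGeom t A B + ((1 - t) • A + t • B)) ∧
    (1/2 : ℝ) • (weightedGeom t A B + ((1 - t) • A + t • B)) ≤ (1 - t) • A + t • B := by
  obtain ⟨ht0, ht1⟩ := ht
  have hApos := hA'.isStrictlyPositive hA
  have hBpos := hB'.isStrictlyPositive hB
  have hpow : ContinuousOn (fun x : ℝ => x ^ t) (Ioi 0) :=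
    (Real.continuous_rpow_const ht0.le).continuousOn
  have haff : ContinuousOn (fun x : ℝ => (1 - t) + t * x) (Ioi 0) := by fun_prop
  have hsum : ContinuousOn (fun x : ℝ => x ^ t + ((1 - t) + t * x)) (Ioi 0) := hpow.add haff
  have harith : opMean (fun x => (1 - t) + t * x) A B = (1 - t) • A + t • B :=
    opMean_affine _ _ hApos hBpos.isSelfAdjoint
  have hheron : opMean (fun x => 1 / 2 * (x ^ t + ((1 - t) + t * x))) A B =
      (1/2 : ℝ) • (weightedGeom t A B + ((1 - t) • A + t • B)) := by
    rw [opMean_const_mul _ hsum hApos hBpos, opMean_add hpow haff hApos hBpos, harith]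
    rfl
  refine ⟨opMean_mono hpow (continuousOn_weightedLogFun t)
    (fun x hx => rpow_le_weightedLogFun ht0 ht1 hx) hApos hBpos, ?_, ?_⟩
  · rw [← hheron]
    exact opMean_mono (continuousOn_weightedLogFun t) (continuousOn_const.mul hsum)
      (fun x hx => weightedLogFun_le ht0 ht1 hx) hApos hBpos
  · rw [← hheron, ← harith]
    exact opMean_mono (continuousOn_const.mul hsum) haff
      (fun x hx => by linarith [Real.rpow_le_one_sub_add_mul hx ht0.le ht1.le]) hApos hBpos
end

section
/- For positive reals a ≠ b and t ∈ (0,1): a^(1−t)b^t ≤ (1/e)·((1−t)a + t·b)^{((1−2t)(tb+(1−t)a))/(t(1−t)(b−a))}·(b^{tb/(1−t)}/a^{((1−t)a)/t})^{1/(b−a)} ≤ (1−t)a + t·b. -/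
/-!
With `c = (1 - t) a + t b`, the weighted identric mean factors as
`I_t(a, b) = I(a, c) ^ (1 - t) * I(c, b) ^ t`, where `log I(x, y)` is the mean value of `log`
on the interval between `x` and `y`. Since `log` is concave, it lies above its chords and below
its tangent at the midpoint, and integrating gives the Hermite–Hadamard bounds
`(log x + log y) / 2 ≤ log I(x, y) ≤ log ((x + y) / 2)`. Applied to both factors and combined
with the concavity of `log` once more, these become the two claimed inequalities.
-/

open Real Set intervalIntegral

lemma mul_log_add_mul_log_le_log {p q w : ℝ} (hp : 0 < p) (hq : 0 < q) (hw₀ : 0 ≤ w)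
    (hw₁ : w ≤ 1) : (1 - w) * log p + w * log q ≤ log ((1 - w) * p + w * q) :=
  strictConcaveOn_log_Ioi.concaveOn.2 hp hq (by linarith) hw₀ (by ring)

lemma integral_log_le_mul_log_midpoint {x y : ℝ} (hx : 0 < x) (hxy : x ≤ y) :
    ∫ s in x..y, log s ≤ (y - x) * log ((x + y) / 2) := by
  set m := (x + y) / 2 with hm_def
  have hm : 0 < m := by linarith
  have tangent : ∀ s ∈ Icc x y, log s ≤ log m + s / m - 1 := fun s hs => by
    have := log_le_sub_one_of_pos (div_pos (hx.trans_le hs.1) hm)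
    rw [log_div (hx.trans_le hs.1).ne' hm.ne'] at this
    linarith
  calc ∫ s in x..y, log s ≤ ∫ s in x..y, (log m + s / m - 1) :=
        integral_mono_on hxy intervalIntegrable_log'
          ((by fun_prop : Continuous fun s => log m + s / m - 1).intervalIntegrable _ _) tangent
    _ = (y - x) * log m := by
        rw [integral_sub, integral_add] <;> try simp
        have : (y ^ 2 - x ^ 2) / 2 / m = y - x := by rw [div_eq_iff hm.ne', hm_def]; ring
        linarith

lemma mul_log_add_log_div_two_le_integral_log {x y : ℝ} (hx : 0 < x) (hxy : x < y) :
    (y - x) * ((log x + log y) / 2) ≤ ∫ s in x..y, log s := by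
  have hyx : 0 < y - x := sub_pos.2 hxy
  have chord : ∀ s ∈ Icc x y, log x + (s - x) / (y - x) * (log y - log x) ≤ log s :=
    fun s hs => by
      have := mul_log_add_mul_log_le_log hx (hx.trans hxy)
        (div_nonneg (sub_nonneg.2 hs.1) hyx.le) ((div_le_one hyx).2 (by linarith [hs.2]))
      have hs' : (1 - (s - x) / (y - x)) * x + (s - x) / (y - x) * y = s := by
        field_simp; ring
      rw [hs'] at this
      linarith
  have hchord : Continuous fun s => log x + (s - x) / (y - x) * (log y - log x) := by fun_prop
  calc (y - x) * ((log x + log y) / 2)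
      = ∫ s in x..y, (log x + (s - x) / (y - x) * (log y - log x)) := by
        rw [integral_add] <;> try simp
        · field_simp
          ring
        · exact (by fun_prop : Continuous fun s => (s - x) / (y - x) * (log y - log x)
            ).intervalIntegrable _ _
    _ ≤ ∫ s in x..y, log s :=
        integral_mono_on hxy.le (hchord.intervalIntegrable _ _) intervalIntegrable_log' chord

noncomputable def logIdentricMean (x y : ℝ) : ℝ := (y - x)⁻¹ * ∫ s in x..y, log s

lemma logIdentricMean_comm (x y : ℝ) : logIdentricMean x y = logIdentricMean y x := by
  rw [logIdentricMean, logIdentricMean, integral_symm, ← neg_sub, inv_neg, neg_mul_neg]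

lemma logIdentricMean_eq {x y : ℝ} (hxy : x ≠ y) :
    logIdentricMean x y = (y * log y - x * log x) / (y - x) - 1 := by
  have : y - x ≠ 0 := sub_ne_zero.2 hxy.symm
  rw [logIdentricMean, integral_log]
  field_simp
  ring

lemma log_add_log_div_two_le_logIdentricMean {x y : ℝ} (hx : 0 < x) (hy : 0 < y)
    (hxy : x ≠ y) : (log x + log y) / 2 ≤ logIdentricMean x y := by
  wlog h : x < y generalizing x y
  · rw [add_comm, logIdentricMean_comm]
    exact this hy hx hxy.symm (hxy.lt_or_gt.resolve_left h)
  rw [logIdentricMean, le_inv_mul_iff₀ (sub_pos.2 h)]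
  exact mul_log_add_log_div_two_le_integral_log hx h

lemma logIdentricMean_le_log_add_div_two {x y : ℝ} (hx : 0 < x) (hy : 0 < y) (hxy : x ≠ y) :
    logIdentricMean x y ≤ log ((x + y) / 2) := by
  wlog h : x < y generalizing x y
  · rw [add_comm, logIdentricMean_comm]
    exact this hy hx hxy.symm (hxy.lt_or_gt.resolve_left h)
  rw [logIdentricMean, inv_mul_le_iff₀ (sub_pos.2 h)]
  exact integral_log_le_mul_log_midpoint hx h.le

noncomputable def weightedIdentricMean (t a b : ℝ) : ℝ :=
  (1 / exp 1) *
    ((1 - t) * a + t * b) ^ ((1 - 2*t) * (t * b + (1 - t) * a) / (t * (1 - t) * (b - a))) *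
    ((b ^ (t * b / (1 - t))) / (a ^ ((1 - t) * a / t))) ^ (1 / (b - a))

lemma weightedIdentricMean_pos {t a b : ℝ} (ha : 0 < a) (hb : 0 < b)
    (hc : 0 < (1 - t) * a + t * b) : 0 < weightedIdentricMean t a b := by
  unfold weightedIdentricMean
  positivity

lemma log_weightedIdentricMean {t a b : ℝ} (ha : 0 < a) (hb : 0 < b) (hab : a ≠ b)
    (ht₀ : 0 < t) (ht₁ : t < 1) :
    log (weightedIdentricMean t a b) =
      (1 - t) * logIdentricMean a ((1 - t) * a + t * b) +
        t * logIdentricMean ((1 - t) * a + t * b) b := by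
  have hc : 0 < (1 - t) * a + t * b := by nlinarith
  have hac : a ≠ (1 - t) * a + t * b := fun h => hab (by nlinarith)
  have hcb : (1 - t) * a + t * b ≠ b := fun h => hab (by nlinarith)
  rw [weightedIdentricMean, one_div (exp 1), log_mul (by positivity) (by positivity),
    log_mul (by positivity) (by positivity), log_inv, log_exp, log_rpow hc,
    log_rpow (by positivity), log_div (by positivity) (by positivity), log_rpow hb, log_rpow ha,
    logIdentricMean_eq hac, logIdentricMean_eq hcb]
  have : b - a ≠ 0 := sub_ne_zero.2 hab.symm
  have : 1 - t ≠ 0 := by linarith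
  field_simp
  ring

/-- The weighted identric mean lies between the weighted geometric and weighted
arithmetic means. -/
theorem geom_le_weighted_identric_le_arith (a b t : ℝ) (ha : 0 < a) (hb : 0 < b)
    (hab : a ≠ b) (ht : t ∈ Ioo (0:ℝ) 1) :
    a ^ (1 - t) * b ^ t ≤
      (1 / Real.exp 1) *
        ((1 - t) * a + t * b) ^ ((1 - 2*t) * (t * b + (1 - t) * a) / (t * (1 - t) * (b - a))) *
        ((b ^ (t * b / (1 - t))) / (a ^ ((1 - t) * a / t))) ^ (1 / (b - a)) ∧
    (1 / Real.exp 1) *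
        ((1 - t) * a + t * b) ^ ((1 - 2*t) * (t * b + (1 - t) * a) / (t * (1 - t) * (b - a))) *
        ((b ^ (t * b / (1 - t))) / (a ^ ((1 - t) * a / t))) ^ (1 / (b - a)) ≤
      (1 - t) * a + t * b := by
  obtain ⟨ht₀, ht₁⟩ := ht
  change _ ≤ weightedIdentricMean t a b ∧ weightedIdentricMean t a b ≤ _
  set c := (1 - t) * a + t * b
  have hc : 0 < c := by nlinarith
  have hac : a ≠ c := fun h => hab (by nlinarith)
  have hcb : c ≠ b := fun h => hab (by nlinarith)
  have hI := weightedIdentricMean_pos ha hb hc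
  rw [← log_le_log_iff (by positivity) hI, ← log_le_log_iff hI hc,
    log_weightedIdentricMean ha hb hab ht₀ ht₁, log_mul (by positivity) (by positivity),
    log_rpow ha, log_rpow hb]
  constructor
  · calc (1 - t) * log a + t * log b
        ≤ (1 - t) * ((log a + log c) / 2) + t * ((log c + log b) / 2) := by
          linarith [mul_log_add_mul_log_le_log ha hb ht₀.le ht₁.le]
      _ ≤ (1 - t) * logIdentricMean a c + t * logIdentricMean c b := by
          gcongr
          · exact log_add_log_div_two_le_logIdentricMean ha hc hac
          · exact log_add_log_div_two_le_logIdentricMean hc hb hcb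
  · calc (1 - t) * logIdentricMean a c + t * logIdentricMean c b
        ≤ (1 - t) * log ((a + c) / 2) + t * log ((c + b) / 2) := by
          gcongr
          · exact logIdentricMean_le_log_add_div_two ha hc hac
          · exact logIdentricMean_le_log_add_div_two hc hb hcb
      _ ≤ log ((1 - t) * ((a + c) / 2) + t * ((c + b) / 2)) :=
          mul_log_add_mul_log_le_log (by positivity) (by positivity) ht₀.le ht₁.le
      _ = log c := by congr 1; ring
end

section
/- For positive reals a ≠ b and t ∈ (0,1): log I_t(a,b) = (1−t)∫₀¹ log(tα(b−a)+a) dα + t∫₀¹ log((1−t)α(b−a)+tb+(1−t)a) dα, where I_t(a,b) = (1/e)·((1−t)a + t·b)^{((1−2t)(tb+(1−t)a))/(t(1−t)(b−a))}·(b^{tb/(1−t)}/a^{((1−t)a)/t})^{1/(b−a)}. -/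
open Set MeasureTheory

/-
Both integrals are averages of `log` along a segment, and the average of `log` over `[x, y]` is
`(y log y - x log x) / (y - x) - 1`, the logarithm of the identric mean of `x` and `y`. The first
integral runs over `[a, m]` and the second over `[m, b]`, where `m = t b + (1 - t) a`; since
`m - a = t (b - a)` and `b - m = (1 - t) (b - a)`, taking the logarithm of the explicit
expression and clearing denominators leaves a ring identity.
-/

theorem integral_log_mul_sub_add {x y : ℝ} (hxy : x ≠ y) :
    ∫ α in (0:ℝ)..1, Real.log ((y - x) * α + x) = (y * Real.log y - x * Real.log x) / (y - x) - 1 := by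
  have hyx : y - x ≠ 0 := sub_ne_zero.mpr hxy.symm
  rw [intervalIntegral.integral_comp_mul_add _ hyx, integral_log, smul_eq_mul]
  field_simp
  ring_nf

theorem log_weighted_identric_eq {a b t : ℝ} (ha : 0 < a) (hb : 0 < b) (ht0 : 0 < t)
    (ht1 : t < 1) :
    Real.log ((1 / Real.exp 1) *
        ((1 - t) * a + t * b) ^ ((1 - 2*t) * (t * b + (1 - t) * a) / (t * (1 - t) * (b - a))) *
        ((b ^ (t * b / (1 - t))) / (a ^ ((1 - t) * a / t))) ^ (1 / (b - a))) =
      -1 + (1 - 2*t) * (t * b + (1 - t) * a) / (t * (1 - t) * (b - a))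
          * Real.log ((1 - t) * a + t * b) +
        1 / (b - a) * (t * b / (1 - t) * Real.log b - (1 - t) * a / t * Real.log a) := by
  have hm : 0 < (1 - t) * a + t * b := by nlinarith
  have hbp : 0 < b ^ (t * b / (1 - t)) := Real.rpow_pos_of_pos hb _
  have hap : 0 < a ^ ((1 - t) * a / t) := Real.rpow_pos_of_pos ha _
  rw [Real.log_mul (by positivity) (Real.rpow_pos_of_pos (div_pos hbp hap) _).ne',
    Real.log_mul (by positivity) (Real.rpow_pos_of_pos hm _).ne', Real.log_rpow hm,
    Real.log_rpow (div_pos hbp hap), Real.log_div hbp.ne' hap.ne', Real.log_rpow hb,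
    Real.log_rpow ha, one_div, Real.log_inv, Real.log_exp]

/-- Integral representation of the logarithm of the weighted identric mean. -/
theorem log_weighted_identric_integral_rep (a b t : ℝ) (ha : 0 < a) (hb : 0 < b)
    (hab : a ≠ b) (ht : t ∈ Ioo (0:ℝ) 1) :
    Real.log ((1 / Real.exp 1) *
        ((1 - t) * a + t * b) ^ ((1 - 2*t) * (t * b + (1 - t) * a) / (t * (1 - t) * (b - a))) *
        ((b ^ (t * b / (1 - t))) / (a ^ ((1 - t) * a / t))) ^ (1 / (b - a))) =
      (1 - t) * (∫ α in (0:ℝ)..1, Real.log (t * α * (b - a) + a)) +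
        t * (∫ α in (0:ℝ)..1, Real.log ((1 - t) * α * (b - a) + t * b + (1 - t) * a)) := by
  obtain ⟨ht0, ht1⟩ := ht
  have hba : b - a ≠ 0 := sub_ne_zero.mpr hab.symm
  set m := t * b + (1 - t) * a with hm_def
  have ham : a ≠ m := fun h => hba (by nlinarith)
  have hmb : m ≠ b := fun h => hba (by nlinarith)
  have lower : ∫ α in (0:ℝ)..1, Real.log (t * α * (b - a) + a)
      = (m * Real.log m - a * Real.log a) / (m - a) - 1 := by
    rw [← integral_log_mul_sub_add ham, hm_def]
    congr 1 with α
    ring_nf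
  have upper : ∫ α in (0:ℝ)..1, Real.log ((1 - t) * α * (b - a) + t * b + (1 - t) * a)
      = (b * Real.log b - m * Real.log m) / (b - m) - 1 := by
    rw [← integral_log_mul_sub_add hmb, hm_def]
    congr 1 with α
    ring_nf
  rw [log_weighted_identric_eq ha hb ht0 ht1, show (1 - t) * a + t * b = m by ring, lower,
    upper, show m - a = t * (b - a) by ring,
    show b - m = (1 - t) * (b - a) by ring]
  have h1t : 1 - t ≠ 0 := by linarith
  field_simp
  ring
end

section
/- For x > 0, x ≠ 1, and t ∈ (0,1), log g_t(x) = ((1−t)/t)∫₀ᵗ log(αx + 1 − α) dα + (t/(1−t))∫ₜ¹ log(αx + 1 − α) dα, where g_t(x) = (1/e)(1−t+tx)^{((1−2t)(1−t+tx))/(t(1−t)(x−1))}·(x^{tx/(1−t)})^{1/(x−1)}. -/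
/-!
With `u = 1 - t + t x`, the substitution `β = (x - 1) α + 1` turns both integrals into integrals
of `log`, whose antiderivative is `β log β - β`. Expanding the logarithm of the product of powers
leaves an identity that is linear in `log u` and `log x`; the constant terms add up to `-1`
because `1 - u = t (1 - x)` and `u - x = (1 - t) (1 - x)`.
-/

open Set MeasureTheory Real

theorem integral_log_mul_add {c : ℝ} (hc : c ≠ 0) (d a b : ℝ) :
    ∫ α in a..b, log (c * α + d) =
      ((c * b + d) * log (c * b + d) - (c * a + d) * log (c * a + d)
        - (c * b + d) + (c * a + d)) / c := by
  rw [intervalIntegral.integral_comp_mul_add log hc d, integral_log, smul_eq_mul,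
    div_eq_inv_mul]

theorem log_exp_neg_one_mul_rpow_mul_rpow_rpow {u x : ℝ} (hu : 0 < u) (hx : 0 < x) (p q r : ℝ) :
    log ((1 / exp 1) * u ^ p * (x ^ q) ^ r) = -1 + p * log u + r * q * log x := by
  have hxq : 0 < x ^ q := rpow_pos_of_pos hx q
  rw [log_mul (by positivity) (rpow_pos_of_pos hxq r).ne', log_mul (by positivity)
    (rpow_pos_of_pos hu p).ne', log_rpow hu, log_rpow hxq, log_rpow hx, one_div, log_inv,
    log_exp]
  ring

/-- Integral representation of the logarithm of the representing function `g_t`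
of the weighted identric mean. -/
theorem log_rep_fun_weighted_identric (x t : ℝ) (hx : 0 < x) (hx1 : x ≠ 1)
    (ht : t ∈ Ioo (0:ℝ) 1) :
    Real.log ((1 / Real.exp 1) *
        (1 - t + t * x) ^ ((1 - 2*t) * (1 - t + t * x) / (t * (1 - t) * (x - 1))) *
        (x ^ (t * x / (1 - t))) ^ (1 / (x - 1))) =
      ((1 - t) / t) * (∫ α in (0:ℝ)..t, Real.log (α * x + 1 - α)) +
        (t / (1 - t)) * (∫ α in t..(1:ℝ), Real.log (α * x + 1 - α)) := by
  obtain ⟨ht0, ht1⟩ := ht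
  have hx1' : x - 1 ≠ 0 := sub_ne_zero.mpr hx1
  have hu : 0 < 1 - t + t * x := by nlinarith
  have affine : ∀ α : ℝ, α * x + 1 - α = (x - 1) * α + 1 := fun α => by ring
  have hut : (x - 1) * t + 1 = 1 - t + t * x := by ring
  simp_rw [affine, integral_log_mul_add hx1', hut]
  rw [log_exp_neg_one_mul_rpow_mul_rpow_rpow hu hx, mul_zero, zero_add, log_one,
    mul_one, sub_add_cancel]
  have ht1' : 1 - t ≠ 0 := by linarith
  field_simp
  ring
end
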